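/- arXiv:2002.11923 — 3 statements merged into one kernel-verified Lean document; each statement's English description precedes it below -/
import Mathlib

section
/- Let a > 0, δ ≥ 0, and suppose a ≥ ρ > 0 where δ = ε(D+ρ)² with ε = (1/5)·ε₀/(E+1), E = D²/ρ², D ≥ 0, ε₀ ∈ (0,1). If a real number a' satisfies a' ≥ (2a² − 3δ)/(2√(a²+δ)), then a' ≥ (1 − ε₀)·ρ. -/
/-! Writing `s = √(a² + δ)`, the triangle bound equals `s - (5δ/2)/s`, which is increasing in `s`;
since `s ≥ ρ` it is at least `ρ - (5δ/2)/ρ`. The parameter choice makes `δ ≤ (2/5) ε₀ ρ²`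
because `(D + ρ)² ≤ 2 (D² + ρ²) = 2 (E + 1) ρ²`, so the loss `(5δ/2)/ρ` is at most `ε₀ ρ`. -/

lemma sub_div_le_sub_div {c x y : ℝ} (hc : 0 ≤ c) (hx : 0 < x) (hxy : x ≤ y) :
    x - c / x ≤ y - c / y := by
  have : c / y ≤ c / x := div_le_div_of_nonneg_left hc hx hxy
  linarith

lemma two_mul_sq_sub_div_two_mul_sqrt {a δ : ℝ} (h : 0 < a ^ 2 + δ) :
    (2 * a ^ 2 - 3 * δ) / (2 * √(a ^ 2 + δ)) = √(a ^ 2 + δ) - 5 * δ / 2 / √(a ^ 2 + δ) := by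
  have hs : 0 < √(a ^ 2 + δ) := Real.sqrt_pos.mpr h
  have hs2 : √(a ^ 2 + δ) ^ 2 = a ^ 2 + δ := Real.sq_sqrt h.le
  field_simp
  linarith

lemma sub_div_le_two_mul_sq_sub_div_two_mul_sqrt {a δ ρ : ℝ} (hρ : 0 < ρ) (haρ : ρ ≤ a)
    (hδ : 0 ≤ δ) :
    ρ - 5 * δ / 2 / ρ ≤ (2 * a ^ 2 - 3 * δ) / (2 * √(a ^ 2 + δ)) := by
  have hρs : ρ ≤ √(a ^ 2 + δ) :=
    Real.le_sqrt_of_sq_le (by nlinarith)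
  rw [two_mul_sq_sub_div_two_mul_sqrt (by nlinarith)]
  exact sub_div_le_sub_div (by positivity) hρ hρs

lemma div_sq_div_add_one_mul_add_sq_le {ε₀ D ρ : ℝ} (hε₀ : 0 ≤ ε₀) (hρ : ρ ≠ 0) :
    1 / 5 * ε₀ / (D ^ 2 / ρ ^ 2 + 1) * (D + ρ) ^ 2 ≤ 2 * ε₀ * ρ ^ 2 / 5 := by
  have hρ2 : 0 < ρ ^ 2 := by positivity
  have hsum : D ^ 2 / ρ ^ 2 + 1 = (D ^ 2 + ρ ^ 2) / ρ ^ 2 := by field_simp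
  rw [hsum, div_div_eq_mul_div, div_mul_eq_mul_div, div_le_div_iff₀ (by positivity) (by norm_num)]
  have := mul_le_mul_of_nonneg_left (add_sq_le (a := D) (b := ρ)) (mul_nonneg hε₀ hρ2.le)
  nlinarith

theorem margin_preservation_step_general (a δ ρ ε E D ε₀ a' : ℝ)
    (hδnn : 0 ≤ δ) (haρ : a ≥ ρ) (hρ : 0 < ρ)
    (hε₀ : 0 < ε₀ ∧ ε₀ < 1)
    (hE : E = D ^ 2 / ρ ^ 2) (hε : ε = (1 / 5) * ε₀ / (E + 1))
    (hδ : δ = ε * (D + ρ) ^ 2)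
    (ha' : a' ≥ (2 * a ^ 2 - 3 * δ) / (2 * Real.sqrt (a ^ 2 + δ))) :
    a' ≥ (1 - ε₀) * ρ := by
  have hloss : 5 * δ / 2 / ρ ≤ ε₀ * ρ := by
    have hδle : δ ≤ 2 * ε₀ * ρ ^ 2 / 5 := by
      subst hδ hε hE
      exact div_sq_div_add_one_mul_add_sq_le hε₀.1.le hρ.ne'
    rw [div_le_iff₀ hρ]
    nlinarith
  have htriangle := sub_div_le_two_mul_sq_sub_div_two_mul_sqrt hρ haρ hδnn
  linarith

/-- Combining the triangle preservation bound with the parameter choice: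
`a' ≥ (2a² − 3δ)/(2√(a²+δ))` implies `a' ≥ (1 − ε₀)ρ`. -/
theorem margin_preservation_step (a δ ρ ε E D ε₀ a' : ℝ)
    (ha : 0 < a) (hδnn : 0 ≤ δ) (haρ : a ≥ ρ) (hρ : 0 < ρ)
    (hD : 0 ≤ D) (hε₀ : 0 < ε₀ ∧ ε₀ < 1)
    (hE : E = D ^ 2 / ρ ^ 2) (hε : ε = (1 / 5) * ε₀ / (E + 1))
    (hδ : δ = ε * (D + ρ) ^ 2)
    (ha' : a' ≥ (2 * a ^ 2 - 3 * δ) / (2 * Real.sqrt (a ^ 2 + δ))) :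
    a' ≥ (1 - ε₀) * ρ :=
  margin_preservation_step_general a δ ρ ε E D ε₀ a' hδnn haρ hρ hε₀ hE hε hδ ha'
end

section
/- Let S ⊂ ℝᵈ be finite, ε ∈ (0,1), and let x ∈ conv(S) with x ≠ 0 be an ε-approximation of the polytope distance from the origin o to S, i.e., ‖x‖ ≤ (1/(1−ε))·⟨p, x⟩/‖x‖ for all p ∈ S. Let y = (1−ε)x. Then every p ∈ S satisfies ⟨p, y⟩ ≥ ‖y‖², i.e., the hyperplane through y orthogonal to y separates o from S, and ‖y‖ ≥ (1−ε)·ρ* where ρ* is the maximum width of a margin separating o and S (equivalently ρ* = min_{z∈conv(S)}‖z‖). -/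
open RealInnerProductSpace

section ApproximateSeparation

variable {E : Type*} [NormedAddCommGroup E] [InnerProductSpace ℝ E]

theorem mul_norm_sq_le_inner_of_le_mul_div_norm {c : ℝ} (hc : 0 < c) {p x : E}
    (h : ‖x‖ ≤ 1 / c * (⟪p, x⟫ / ‖x‖)) : c * ‖x‖ ^ 2 ≤ ⟪p, x⟫ := by
  rcases eq_or_ne x 0 with rfl | hx0
  · simp
  have hx : 0 < ‖x‖ := norm_pos_iff.mpr hx0
  rw [one_div, inv_mul_eq_div, le_div_iff₀ hc, le_div_iff₀ hx] at h
  linarith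

theorem norm_smul_sq_le_inner_smul {c : ℝ} (hc : 0 ≤ c) {p x : E}
    (h : c * ‖x‖ ^ 2 ≤ ⟪p, x⟫) : ‖c • x‖ ^ 2 ≤ ⟪p, c • x⟫ := by
  calc ‖c • x‖ ^ 2 = c * (c * ‖x‖ ^ 2) := by
        rw [norm_smul, Real.norm_of_nonneg hc]; ring
    _ ≤ c * ⟪p, x⟫ := mul_le_mul_of_nonneg_left h hc
    _ = ⟪p, c • x⟫ := (inner_smul_right p x c).symm

end ApproximateSeparation

theorem eps_approx_separating_margin_general {d : ℕ} (S : Finset (EuclideanSpace ℝ (Fin d)))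
    (ε : ℝ) (hε : 0 < ε ∧ ε < 1)
    (x : EuclideanSpace ℝ (Fin d))
    (hx : x ∈ convexHull ℝ (S : Set (EuclideanSpace ℝ (Fin d))))
    (happrox : ∀ p ∈ S, ‖x‖ ≤ (1 / (1 - ε)) * ((inner ℝ p x : ℝ) / ‖x‖))
    (y : EuclideanSpace ℝ (Fin d)) (hy : y = (1 - ε) • x)
    (ρstar : ℝ)
    (hρ : IsLeast {r : ℝ | ∃ z ∈ convexHull ℝ (S : Set (EuclideanSpace ℝ (Fin d))), ‖z‖ = r} ρstar) :
    (∀ p ∈ S, (inner ℝ p y : ℝ) ≥ ‖y‖ ^ 2) ∧ ‖y‖ ≥ (1 - ε) * ρstar := by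
  have hc : 0 < 1 - ε := sub_pos.mpr hε.2
  subst hy
  refine ⟨fun p hp => ?_, ?_⟩
  · exact norm_smul_sq_le_inner_smul hc.le
      (mul_norm_sq_le_inner_of_le_mul_div_norm hc (happrox p hp))
  · rw [norm_smul, Real.norm_of_nonneg hc.le]
    exact mul_le_mul_of_nonneg_left (hρ.2 ⟨x, hx, rfl⟩) hc.le

/-- Proposition 3.2(ii): if `x ∈ conv(S)` is an ε-approximation of the polytope
distance from the origin to `S` and `y = (1−ε)x`, then the hyperplane through
`y` orthogonal to `y` separates the origin from `S`, and `‖y‖ ≥ (1−ε)·ρ*` where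
`ρ* = min_{z ∈ conv(S)} ‖z‖` is the maximum separating margin width. -/
theorem eps_approx_separating_margin {d : ℕ} (S : Finset (EuclideanSpace ℝ (Fin d)))
    (ε : ℝ) (hε : 0 < ε ∧ ε < 1)
    (x : EuclideanSpace ℝ (Fin d))
    (hx : x ∈ convexHull ℝ (S : Set (EuclideanSpace ℝ (Fin d)))) (hx0 : x ≠ 0)
    (happrox : ∀ p ∈ S, ‖x‖ ≤ (1 / (1 - ε)) * ((inner ℝ p x : ℝ) / ‖x‖))
    (y : EuclideanSpace ℝ (Fin d)) (hy : y = (1 - ε) • x)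
    (ρstar : ℝ)
    (hρ : IsLeast {r : ℝ | ∃ z ∈ convexHull ℝ (S : Set (EuclideanSpace ℝ (Fin d))), ‖z‖ = r} ρstar) :
    (∀ p ∈ S, (inner ℝ p y : ℝ) ≥ ‖y‖ ^ 2) ∧ ‖y‖ ≥ (1 - ε) * ρstar :=
  eps_approx_separating_margin_general S ε hε x hx happrox y hy ρstar hρ
end

section
/- Suppose f : ℝᵈ → ℝ^m is a linear map, C ⊂ ℝᵈ is finite, ε ∈ (0,1), and for every p ∈ C and q ∈ conv(C), |‖p−q‖² − ‖f(p)−f(q)‖²| ≤ ε·rad(C)². Let c̄ ∈ conv(f(C)) with c̄ = Σ_{q∈f(C)} α_q q (a convex combination), and define c = Σ α_q f⁻¹(q) ∈ conv(C) (where f⁻¹ maps f(p) back to p for p ∈ C, assuming f is injective on C). Then for every p ∈ C: ‖p − c‖² ≤ (1/(1−ε))·max_{q'∈C} ‖f(q') − c̄‖². -/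
/-- The minimum enclosing ball radius of a finite set `T`. -/
noncomputable def rad {d : ℕ} (T : Set (EuclideanSpace ℝ (Fin d))) : ℝ :=
  sInf {r : ℝ | ∃ z, ∀ t ∈ T, dist t z ≤ r}

/-!
Any point `c` is a candidate centre for the enclosing ball of `C`, so some `q ∈ C` has
`‖q - c‖ ≥ rad C`. The distortion bound at `(q, c)` then gives
`max_{q'} ‖f q' - c̄‖² ≥ (1 - ε) rad(C)²`, and the distortion bound at `(p, c)` gives
`‖p - c‖² ≤ ‖f p - c̄‖² + ε rad(C)² ≤ max_{q'} ‖f q' - c̄‖² / (1 - ε)`.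
-/

section Rad

variable {d : ℕ}

lemma rad_nonneg {T : Set (EuclideanSpace ℝ (Fin d))} (hT : T.Nonempty) : 0 ≤ rad T :=
  Real.sInf_nonneg fun _ ⟨_, hz⟩ => dist_nonneg.trans (hz _ hT.some_mem)

lemma rad_le_of_forall_dist_le {T : Set (EuclideanSpace ℝ (Fin d))} (hT : T.Nonempty)
    {z : EuclideanSpace ℝ (Fin d)} {r : ℝ} (h : ∀ t ∈ T, dist t z ≤ r) : rad T ≤ r :=
  csInf_le ⟨0, fun _ ⟨_, hz⟩ => dist_nonneg.trans (hz _ hT.some_mem)⟩ ⟨z, h⟩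

lemma exists_mem_rad_le_dist {C : Finset (EuclideanSpace ℝ (Fin d))} (hC : C.Nonempty)
    (z : EuclideanSpace ℝ (Fin d)) :
    ∃ q ∈ C, rad (C : Set (EuclideanSpace ℝ (Fin d))) ≤ dist q z := by
  obtain ⟨q, hq, hmax⟩ := C.exists_max_image (dist · z) hC
  exact ⟨q, hq, rad_le_of_forall_dist_le (Finset.coe_nonempty.mpr hC) hmax⟩

lemma one_sub_mul_rad_sq_le_sup' {C : Finset (EuclideanSpace ℝ (Fin d))} (hC : C.Nonempty)
    {ε : ℝ} (c : EuclideanSpace ℝ (Fin d)) (φ : EuclideanSpace ℝ (Fin d) → ℝ)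
    (h : ∀ p ∈ C, ‖p - c‖ ^ 2 ≤ φ p + ε * rad (C : Set (EuclideanSpace ℝ (Fin d))) ^ 2) :
    (1 - ε) * rad (C : Set (EuclideanSpace ℝ (Fin d))) ^ 2 ≤ C.sup' hC φ := by
  obtain ⟨q, hq, hrad⟩ := exists_mem_rad_le_dist hC c
  have hsq : rad (C : Set (EuclideanSpace ℝ (Fin d))) ^ 2 ≤ ‖q - c‖ ^ 2 :=
    pow_le_pow_left₀ (rad_nonneg (Finset.coe_nonempty.mpr hC)) (dist_eq_norm q c ▸ hrad) 2
  linarith [h q hq, C.le_sup' φ hq]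

theorem sq_norm_sub_le_of_sq_norm_sub_le_add {C : Finset (EuclideanSpace ℝ (Fin d))}
    (hC : C.Nonempty) {ε : ℝ} (hε0 : 0 ≤ ε) (hε1 : ε < 1) (c : EuclideanSpace ℝ (Fin d))
    (φ : EuclideanSpace ℝ (Fin d) → ℝ)
    (h : ∀ p ∈ C, ‖p - c‖ ^ 2 ≤ φ p + ε * rad (C : Set (EuclideanSpace ℝ (Fin d))) ^ 2) :
    ∀ p ∈ C, ‖p - c‖ ^ 2 ≤ (1 / (1 - ε)) * C.sup' hC φ := by
  intro p hp
  have hrad := one_sub_mul_rad_sq_le_sup' hC c φ h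
  rw [one_div_mul_eq_div, le_div_iff₀ (sub_pos.mpr hε1)]
  nlinarith [h p hp, C.le_sup' φ hp, mul_le_mul_of_nonneg_left hrad hε0]

end Rad

theorem recovered_center_bound_general {d m : ℕ} (ε : ℝ) (hε : 0 < ε ∧ ε < 1)
    (f : EuclideanSpace ℝ (Fin d) →ₗ[ℝ] EuclideanSpace ℝ (Fin m))
    (C : Finset (EuclideanSpace ℝ (Fin d))) (hC : C.Nonempty)
    (hdistort : ∀ p ∈ C, ∀ q ∈ convexHull ℝ (C : Set (EuclideanSpace ℝ (Fin d))),
      |‖p - q‖ ^ 2 - ‖f p - f q‖ ^ 2| ≤ ε * rad (C : Set (EuclideanSpace ℝ (Fin d))) ^ 2)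
    (cbar : EuclideanSpace ℝ (Fin m))
    (c : EuclideanSpace ℝ (Fin d))
    (hc : c ∈ convexHull ℝ (C : Set (EuclideanSpace ℝ (Fin d))))
    (hfc : f c = cbar) :
    ∀ p ∈ C, ‖p - c‖ ^ 2 ≤ (1 / (1 - ε)) * C.sup' hC (fun q' => ‖f q' - cbar‖ ^ 2) := by
  refine sq_norm_sub_le_of_sq_norm_sub_le_add hC hε.1.le hε.2 c _ fun p hp => ?_
  have hpc := (abs_le.mp (hdistort p hp c hc)).2
  rw [hfc] at hpc
  linarith

/-- Recovery step: if the linear map `f` distorts squared distances between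
points of `C` and points of `conv(C)` by at most `ε·rad(C)²`, `c̄ ∈ conv(f(C))`,
and `c ∈ conv(C)` is the recovered point with `f(c) = c̄`, then every `p ∈ C`
satisfies `‖p − c‖² ≤ (1/(1−ε))·max_{q' ∈ C} ‖f(q') − c̄‖²`. -/
theorem recovered_center_bound {d m : ℕ} (ε : ℝ) (hε : 0 < ε ∧ ε < 1)
    (f : EuclideanSpace ℝ (Fin d) →ₗ[ℝ] EuclideanSpace ℝ (Fin m))
    (C : Finset (EuclideanSpace ℝ (Fin d))) (hC : C.Nonempty)
    (hinj : Set.InjOn f (C : Set (EuclideanSpace ℝ (Fin d))))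
    (hdistort : ∀ p ∈ C, ∀ q ∈ convexHull ℝ (C : Set (EuclideanSpace ℝ (Fin d))),
      |‖p - q‖ ^ 2 - ‖f p - f q‖ ^ 2| ≤ ε * rad (C : Set (EuclideanSpace ℝ (Fin d))) ^ 2)
    (cbar : EuclideanSpace ℝ (Fin m))
    (hcbar : cbar ∈ convexHull ℝ (f '' (C : Set (EuclideanSpace ℝ (Fin d)))))
    (c : EuclideanSpace ℝ (Fin d))
    (hc : c ∈ convexHull ℝ (C : Set (EuclideanSpace ℝ (Fin d))))
    (hfc : f c = cbar) :
    ∀ p ∈ C, ‖p - c‖ ^ 2 ≤ (1 / (1 - ε)) * C.sup' hC (fun q' => ‖f q' - cbar‖ ^ 2) :=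
  recovered_center_bound_general ε hε f C hC hdistort cbar c hc hfc
end
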